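/- arXiv:2004.14809 — 2 statements merged into one kernel-verified Lean document; each statement's English description precedes it below -/
import Mathlib

section
/- Let H be a non-regular connected k-uniform hypergraph with maximum degree Δ, minimum degree δ, average degree d, and signless Laplacian eigenpair (ρ, x) (so that kΔ − ρ > 0 and d − δ > 0). Then γ(H) ≥ ( (ρ − kδ)(Δ − d) ) / ( (kΔ − ρ)(d − δ) ). -/
open Finset Matrix

variable {V : Type*} [Fintype V] [DecidableEq V]

/-- The incidence matrix of a hypergraph with vertex type `V` and edge set `E`:
`B(v,e) = 1` if `v ∈ e` and `0` otherwise. -/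
def inc (E : Finset (Finset V)) : Matrix V ↥E ℝ :=
  fun v e => if v ∈ (e : Finset V) then 1 else 0

/-- The signless Laplacian matrix `Q = B * Bᵀ`. -/
def signlessLap (E : Finset (Finset V)) : Matrix V V ℝ :=
  inc E * (inc E)ᵀ

/-- The degree of a vertex: the number of edges containing it. -/
def deg (E : Finset (Finset V)) (v : V) : ℕ :=
  (E.filter fun e => v ∈ e).card

/-- A hypergraph is connected if the reflexive-transitive closure of the relation
"`u ≠ v` and some edge contains both `u` and `v`" relates every pair of vertices. -/
def HConnected (E : Finset (Finset V)) : Prop :=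
  ∀ u v : V, Relation.ReflTransGen (fun a b => a ≠ b ∧ ∃ e ∈ E, a ∈ e ∧ b ∈ e) u v

/-- A hypergraph is regular if all vertices have the same degree. -/
def HRegular (E : Finset (Finset V)) : Prop :=
  ∃ r, ∀ v : V, deg E v = r

/-- A signless Laplacian eigenpair `(ρ, x)`: `x` is entrywise positive,
normalized by `∑ v, x v ^ 2 = 1`, and `Q x = ρ x`. -/
def Eigenpair (E : Finset (Finset V)) (ρ : ℝ) (x : V → ℝ) : Prop :=
  (∀ v, 0 < x v) ∧ (∑ v, x v ^ 2 = 1) ∧ (signlessLap E).mulVec x = ρ • x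

/-!
Since `Q = B Bᵀ` is symmetric with row sums `k · deg v`, pairing `Q x = ρ x` with the all-ones
vector gives `∑ᵥ (k deg v − ρ) x v = 0`. By the identity
`(Δ − δ)(k deg v − ρ) = (kΔ − ρ)(deg v − δ) − (ρ − kδ)(Δ − deg v)` this says
`(kΔ − ρ) ∑ᵥ (deg v − δ) x v = (ρ − kδ) ∑ᵥ (Δ − deg v) x v`, where both coefficients are
nonnegative because an eigenvalue with a positive eigenvector lies between the smallest and the
largest row sum. Bounding `x` by `x_max` on the left and by `x_min` on the right gives
`(ρ − kδ)(Δ − d) x_min ≤ (kΔ − ρ)(d − δ) x_max`.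
-/

namespace Matrix

variable {n : Type*} [Fintype n] {A : Matrix n n ℝ} {x : n → ℝ} {ρ : ℝ}

theorem eigenvalue_le_of_mulVec_one_le [Nonempty n] (hA : ∀ i j, 0 ≤ A i j)
    (hx : ∀ i, 0 < x i) (hρ : A *ᵥ x = ρ • x) {c : ℝ} (hc : ∀ i, (A *ᵥ 1) i ≤ c) : ρ ≤ c := by
  obtain ⟨i, hi⟩ := Finite.exists_max x
  refine le_of_mul_le_mul_right ?_ (hx i)
  calc ρ * x i = ∑ j, A i j * x j := by simpa [mulVec, dotProduct] using (congrFun hρ i).symm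
    _ ≤ ∑ j, A i j * x i := by gcongr with j; exacts [hA i j, hi j]
    _ = (A *ᵥ 1) i * x i := by simp [mulVec, dotProduct, Finset.sum_mul]
    _ ≤ c * x i := by gcongr; exacts [(hx i).le, hc i]

theorem le_eigenvalue_of_le_mulVec_one [Nonempty n] (hA : ∀ i j, 0 ≤ A i j)
    (hx : ∀ i, 0 < x i) (hρ : A *ᵥ x = ρ • x) {c : ℝ} (hc : ∀ i, c ≤ (A *ᵥ 1) i) : c ≤ ρ := by
  obtain ⟨i, hi⟩ := Finite.exists_min x
  refine le_of_mul_le_mul_right ?_ (hx i)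
  calc c * x i ≤ (A *ᵥ 1) i * x i := by gcongr; exacts [(hx i).le, hc i]
    _ = ∑ j, A i j * x i := by simp [mulVec, dotProduct, Finset.sum_mul]
    _ ≤ ∑ j, A i j * x j := by gcongr with j; exacts [hA i j, hi j]
    _ = ρ * x i := by simpa [mulVec, dotProduct] using congrFun hρ i

theorem IsSymm.mulVec_one_dotProduct_eq (hA : A.IsSymm) (hρ : A *ᵥ x = ρ • x) :
    (A *ᵥ 1) ⬝ᵥ x = ρ * ∑ i, x i := by
  rw [← vecMul_transpose, hA.eq, ← dotProduct_mulVec, hρ, one_dotProduct]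
  simp [Finset.mul_sum]

end Matrix

theorem mul_sum_sub_le_mul_sum_sub {ι : Type*} [Fintype ι] {w x : ι → ℝ}
    {k ρ lo hi xlo xhi : ℝ} (hwlo : ∀ i, lo ≤ w i) (hwhi : ∀ i, w i ≤ hi)
    (hxlo : ∀ i, xlo ≤ x i) (hxhi : ∀ i, x i ≤ xhi) (hρlo : k * lo ≤ ρ) (hρhi : ρ ≤ k * hi)
    (hbal : ∑ i, (k * w i - ρ) * x i = 0) :
    (ρ - k * lo) * (xlo * ∑ i, (hi - w i)) ≤ (k * hi - ρ) * (xhi * ∑ i, (w i - lo)) := by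
  have hsplit : (k * hi - ρ) * ∑ i, (w i - lo) * x i - (ρ - k * lo) * ∑ i, (hi - w i) * x i
      = (hi - lo) * ∑ i, (k * w i - ρ) * x i := by
    simp only [Finset.mul_sum, ← Finset.sum_sub_distrib]
    exact Finset.sum_congr rfl fun i _ => by ring
  calc (ρ - k * lo) * (xlo * ∑ i, (hi - w i))
      ≤ (ρ - k * lo) * ∑ i, (hi - w i) * x i := by
        refine mul_le_mul_of_nonneg_left ?_ (by linarith)
        rw [Finset.mul_sum]
        exact Finset.sum_le_sum fun i _ => by nlinarith [hxlo i, hwhi i]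
    _ = (k * hi - ρ) * ∑ i, (w i - lo) * x i := by
        rw [hbal, mul_zero] at hsplit; linarith
    _ ≤ (k * hi - ρ) * (xhi * ∑ i, (w i - lo)) := by
        refine mul_le_mul_of_nonneg_left ?_ (by linarith)
        rw [Finset.mul_sum]
        exact Finset.sum_le_sum fun i _ => by nlinarith [hxhi i, hwlo i]

theorem div_le_div_of_mul_le_mul {p q r s : ℝ} (hq : 0 ≤ q) (hr : 0 ≤ r) (hs : 0 < s)
    (h : p * s ≤ r * q) : p / q ≤ r / s := by
  rcases hq.eq_or_lt with rfl | hq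
  · rw [div_zero]; positivity
  · rwa [div_le_div_iff₀ hq hs]

section Hypergraph

variable {E : Finset (Finset V)}

omit [Fintype V] in
theorem inc_mulVec_one : inc E *ᵥ 1 = fun v => (deg E v : ℝ) := by
  ext v
  simp only [inc, mulVec, dotProduct, Pi.one_apply, mul_one]
  rw [Finset.sum_coe_sort E fun e => if v ∈ e then (1 : ℝ) else 0, Finset.sum_boole, deg]

theorem inc_transpose_mulVec_one {k : ℕ} (hunif : ∀ e ∈ E, e.card = k) :
    (inc E)ᵀ *ᵥ 1 = fun _ => (k : ℝ) := by
  ext e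
  simp [inc, mulVec, dotProduct, hunif e e.2]

theorem signlessLap_mulVec_one {k : ℕ} (hunif : ∀ e ∈ E, e.card = k) :
    signlessLap E *ᵥ 1 = fun v => (k : ℝ) * deg E v := by
  have hconst : (fun _ : ↥E => (k : ℝ)) = (k : ℝ) • 1 := by ext; simp
  rw [signlessLap, ← mulVec_mulVec, inc_transpose_mulVec_one hunif, hconst, mulVec_smul,
    inc_mulVec_one]
  rfl

omit [Fintype V] in
theorem signlessLap_isSymm : (signlessLap E).IsSymm := by
  simp [signlessLap, IsSymm, transpose_mul]

omit [Fintype V] in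
theorem signlessLap_nonneg (u v : V) : 0 ≤ signlessLap E u v := by
  simp only [signlessLap, mul_apply, transpose_apply, inc]
  positivity

end Hypergraph

theorem gamma_lower_bound_general {V : Type*} [Fintype V] [DecidableEq V] (k : ℕ)
    (E : Finset (Finset V)) (hunif : ∀ e ∈ E, e.card = k)
    (ρ : ℝ) (x : V → ℝ) (hx : Eigenpair E ρ x)
    (Δ δ : ℕ) (hΔ : IsGreatest (Set.range (deg E)) Δ) (hδ : IsLeast (Set.range (deg E)) δ)
    (d : ℝ) (hd : d = (∑ v, (deg E v : ℝ)) / (Fintype.card V))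
    (xmax xmin : ℝ) (hmax : IsGreatest (Set.range x) xmax)
    (hmin : IsLeast (Set.range x) xmin) :
    (ρ - (k : ℝ) * δ) * ((Δ : ℝ) - d) / (((k : ℝ) * Δ - ρ) * (d - (δ : ℝ))) ≤
      xmax / xmin := by
  obtain ⟨hpos, -, heig⟩ := hx
  obtain ⟨⟨vmin, rfl⟩, hxmin⟩ := hmin
  have : Nonempty V := ⟨vmin⟩
  have hcard : (0 : ℝ) < Fintype.card V := by exact_mod_cast Fintype.card_pos
  have hdegΔ (v : V) : (deg E v : ℝ) ≤ Δ := by exact_mod_cast hΔ.2 ⟨v, rfl⟩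
  have hdegδ (v : V) : (δ : ℝ) ≤ deg E v := by exact_mod_cast hδ.2 ⟨v, rfl⟩
  have hrow := signlessLap_mulVec_one hunif
  have hρΔ : ρ ≤ k * Δ := eigenvalue_le_of_mulVec_one_le signlessLap_nonneg hpos heig
    fun v => by rw [hrow]; exact mul_le_mul_of_nonneg_left (hdegΔ v) k.cast_nonneg
  have hρδ : k * δ ≤ ρ := le_eigenvalue_of_le_mulVec_one signlessLap_nonneg hpos heig
    fun v => by rw [hrow]; exact mul_le_mul_of_nonneg_left (hdegδ v) k.cast_nonneg
  have hbal : ∑ v, ((k : ℝ) * deg E v - ρ) * x v = 0 := by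
    have := signlessLap_isSymm.mulVec_one_dotProduct_eq heig
    simp only [hrow, dotProduct, Finset.mul_sum] at this
    simp [sub_mul, Finset.sum_sub_distrib, this]
  have hsum : ∑ v, (deg E v : ℝ) = Fintype.card V * d := by rw [hd]; field_simp
  have hdδ : (δ : ℝ) ≤ d := by
    refine le_of_mul_le_mul_left ?_ hcard
    simpa [hsum] using Finset.sum_le_sum fun v (_ : v ∈ univ) => hdegδ v
  have key := mul_sum_sub_le_mul_sum_sub hdegδ hdegΔ (fun v => hxmin ⟨v, rfl⟩)
    (fun v => hmax.2 ⟨v, rfl⟩) hρδ hρΔ hbal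
  simp only [Finset.sum_sub_distrib, hsum, Finset.sum_const, Finset.card_univ, nsmul_eq_mul]
    at key
  refine div_le_div_of_mul_le_mul (mul_nonneg (by linarith) (by linarith))
    ((hpos vmin).le.trans (hmax.2 ⟨vmin, rfl⟩)) (hpos vmin) ?_
  exact le_of_mul_le_mul_left (by linarith) hcard

/-- For a non-regular connected `k`-graph with maximum degree `Δ`, minimum degree `δ`,
average degree `d` and signless Laplacian eigenpair `(ρ, x)`:
`γ(H) = x_max / x_min ≥ (ρ − kδ)(Δ − d) / ((kΔ − ρ)(d − δ))`. -/
theorem gamma_lower_bound {V : Type*} [Fintype V] [DecidableEq V] (k : ℕ)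
    (hk : 2 ≤ k) (E : Finset (Finset V)) (hunif : ∀ e ∈ E, e.card = k)
    (hconn : HConnected E) (hnotreg : ¬ HRegular E)
    (ρ : ℝ) (x : V → ℝ) (hx : Eigenpair E ρ x)
    (Δ δ : ℕ) (hΔ : IsGreatest (Set.range (deg E)) Δ) (hδ : IsLeast (Set.range (deg E)) δ)
    (d : ℝ) (hd : d = (∑ v, (deg E v : ℝ)) / (Fintype.card V))
    (xmax xmin : ℝ) (hmax : IsGreatest (Set.range x) xmax)
    (hmin : IsLeast (Set.range x) xmin) :
    (ρ - (k : ℝ) * δ) * ((Δ : ℝ) - d) / (((k : ℝ) * Δ - ρ) * (d - (δ : ℝ))) ≤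
      xmax / xmin :=
  gamma_lower_bound_general k E hunif ρ x hx Δ δ hΔ hδ d hd xmax xmin hmax hmin
end

section
/- Let H be a connected k-uniform hypergraph with at least one edge, maximum degree Δ, minimum degree δ, and signless Laplacian eigenpair (ρ, x). Then γ(H) ≥ max{ kΔ/ρ , ρ/(kδ) } ≥ √(Δ/δ), and γ(H) = √(Δ/δ) holds if and only if H is regular. -/
open Finset Matrix

variable {V : Type*} [Fintype V] [DecidableEq V]

/-!
Write `Q x = ρ x` at a vertex `v` as `ρ x_v = ∑_{e ∋ v} ∑_{w ∈ e} x_w`; since every edge has `k`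
vertices, this is squeezed between `d(v) k x_min` and `d(v) k x_max`. At a vertex of maximum degree
this gives `kΔ x_min ≤ ρ x_max`, at one of minimum degree `ρ x_min ≤ kδ x_max`, and the two bounds
multiply to `Δ/δ`. If `γ = √(Δ/δ)`, the first bound is an equality, which forces every vertex in an
edge through a vertex of maximum degree to carry `x_min`, and that vertex to carry `x_max`, so
`x` is constant and `Δ = δ`. Conversely, if `H` is `r`-regular then `ρ = kr`, and the equality case
of the upper bound spreads `x_v = x_max` along edges, so by connectivity `x` is constant.
-/

theorem Finset.sum_sum_eq_sum_sum_iff_of_le {ι κ M : Type*} [AddCommMonoid M] [PartialOrder M]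
    [IsOrderedCancelAddMonoid M] {s : Finset ι} {t : ι → Finset κ} {f g : κ → M}
    (h : ∀ i ∈ s, ∀ j ∈ t i, f j ≤ g j) :
    ∑ i ∈ s, ∑ j ∈ t i, f j = ∑ i ∈ s, ∑ j ∈ t i, g j ↔ ∀ i ∈ s, ∀ j ∈ t i, f j = g j := by
  rw [sum_eq_sum_iff_of_le fun i hi => sum_le_sum (h i hi)]
  exact forall₂_congr fun i _ => sum_eq_sum_iff_of_le (h i ‹_›)

theorem Real.sqrt_mul_le_max {a b : ℝ} (ha : 0 ≤ a) : √(a * b) ≤ max a b := by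
  rw [Real.sqrt_le_left (ha.trans (le_max_left a b))]
  rcases le_total b 0 with hb | hb
  · nlinarith [le_max_left a b]
  · nlinarith [le_max_left a b, le_max_right a b]

theorem eq_of_mul_eq_sq_of_le {a b g : ℝ} (ha : a ≤ g) (hb : b ≤ g) (hb0 : 0 < b)
    (h : a * b = g ^ 2) : a = g := by
  nlinarith

theorem sum_edges_containing_const {V : Type*} [DecidableEq V] {E : Finset (Finset V)} {k : ℕ}
    (hunif : ∀ e ∈ E, e.card = k) (v : V) (c : ℝ) :
    ∑ e ∈ E with v ∈ e, ∑ _w ∈ e, c = deg E v * (k * c) := by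
  rw [sum_congr rfl fun e he => by rw [sum_const, hunif e (mem_filter.1 he).1]]
  simp [deg]

theorem deg_pos_of_mem {V : Type*} [DecidableEq V] {E : Finset (Finset V)} {e : Finset V}
    (he : e ∈ E) {v : V} (hv : v ∈ e) : 0 < deg E v :=
  card_pos.2 ⟨e, mem_filter.2 ⟨he, hv⟩⟩

theorem hRegular_iff_eq {V : Type*} [DecidableEq V] {E : Finset (Finset V)} {Δ δ : ℕ}
    (hΔ : IsGreatest (Set.range (deg E)) Δ) (hδ : IsLeast (Set.range (deg E)) δ) :
    HRegular E ↔ Δ = δ := by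
  constructor
  · rintro ⟨r, hr⟩
    obtain ⟨⟨u, rfl⟩, ⟨w, rfl⟩⟩ := And.intro hΔ.1 hδ.1
    rw [hr u, hr w]
  · rintro rfl
    exact ⟨Δ, fun v => le_antisymm (hΔ.2 ⟨v, rfl⟩) (hδ.2 ⟨v, rfl⟩)⟩

theorem HConnected.exists_mem_edge {V : Type*} {E : Finset (Finset V)} (hconn : HConnected E)
    (hE : ∃ e ∈ E, e.Nonempty) (v : V) : ∃ e ∈ E, v ∈ e := by
  obtain ⟨e₀, he₀, u, hu⟩ := hE
  induction hconn u v with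
  | refl => exact ⟨e₀, he₀, hu⟩
  | tail _ hstep _ =>
    obtain ⟨-, e, he, -, hb⟩ := hstep
    exact ⟨e, he, hb⟩

theorem HConnected.forall_of_closed {V : Type*} {E : Finset (Finset V)} (hconn : HConnected E)
    {P : V → Prop} (hclosed : ∀ e ∈ E, ∀ a ∈ e, P a → ∀ b ∈ e, P b) {v₀ : V} (h₀ : P v₀)
    (v : V) : P v := by
  induction hconn v₀ v with
  | refl => exact h₀
  | tail _ hstep ih =>
    obtain ⟨-, e, he, ha, hb⟩ := hstep
    exact hclosed e he _ ha ih _ hb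

section Hypergraph

variable {E : Finset (Finset V)} {k : ℕ} {ρ : ℝ} {x : V → ℝ}

theorem signlessLap_mulVec_apply (v : V) :
    (signlessLap E *ᵥ x) v = ∑ e ∈ E with v ∈ e, ∑ w ∈ e, x w := by
  rw [signlessLap, ← mulVec_mulVec, sum_filter, ← sum_coe_sort E]
  simp [mulVec, dotProduct, inc]

theorem deg_mul_le_signlessLap_mulVec (hunif : ∀ e ∈ E, e.card = k) {m : ℝ}
    (hm : ∀ w, m ≤ x w) (v : V) : deg E v * (k * m) ≤ (signlessLap E *ᵥ x) v := by
  rw [signlessLap_mulVec_apply, ← sum_edges_containing_const hunif]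
  gcongr with e _ w _
  exact hm w

theorem signlessLap_mulVec_le_deg_mul (hunif : ∀ e ∈ E, e.card = k) {M : ℝ}
    (hM : ∀ w, x w ≤ M) (v : V) : (signlessLap E *ᵥ x) v ≤ deg E v * (k * M) := by
  rw [signlessLap_mulVec_apply, ← sum_edges_containing_const hunif]
  gcongr with e _ w _
  exact hM w

theorem signlessLap_mulVec_eq_deg_mul_iff_of_le (hunif : ∀ e ∈ E, e.card = k)
    {m : ℝ} (hm : ∀ w, m ≤ x w) (v : V) :
    (signlessLap E *ᵥ x) v = deg E v * (k * m) ↔ ∀ e ∈ E, v ∈ e → ∀ w ∈ e, x w = m := by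
  rw [signlessLap_mulVec_apply, ← sum_edges_containing_const hunif, eq_comm,
    sum_sum_eq_sum_sum_iff_of_le fun _ _ w _ => hm w]
  simp only [mem_filter, and_imp, eq_comm (a := m)]

theorem signlessLap_mulVec_eq_deg_mul_iff_of_ge (hunif : ∀ e ∈ E, e.card = k)
    {M : ℝ} (hM : ∀ w, x w ≤ M) (v : V) :
    (signlessLap E *ᵥ x) v = deg E v * (k * M) ↔ ∀ e ∈ E, v ∈ e → ∀ w ∈ e, x w = M := by
  rw [signlessLap_mulVec_apply, ← sum_edges_containing_const hunif,
    sum_sum_eq_sum_sum_iff_of_le fun _ _ w _ => hM w]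
  simp only [mem_filter, and_imp]

theorem Eigenpair.mul_apply (hx : Eigenpair E ρ x) (v : V) : ρ * x v = (signlessLap E *ᵥ x) v := by
  simpa using (congrFun hx.2.2 v).symm

theorem Eigenpair.pos_of_mem (hx : Eigenpair E ρ x) {e : Finset V} (he : e ∈ E) {v : V}
    (hv : v ∈ e) : 0 < ρ := by
  have : 0 < ρ * x v := by
    rw [hx.mul_apply, signlessLap_mulVec_apply]
    exact sum_pos (fun e' he' => sum_pos (fun w _ => hx.1 w) ⟨v, (mem_filter.1 he').2⟩)
      ⟨e, mem_filter.2 ⟨he, hv⟩⟩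
  exact pos_of_mul_pos_left this (hx.1 v).le

theorem Eigenpair.mul_deg_div_le_div (hx : Eigenpair E ρ x) (hunif : ∀ e ∈ E, e.card = k)
    (hρ : 0 < ρ) {m M : ℝ} (hm0 : 0 < m) (hm : ∀ w, m ≤ x w) (hM : ∀ w, x w ≤ M) (v : V) :
    k * deg E v / ρ ≤ M / m := by
  rw [div_le_div_iff₀ hρ hm0]
  calc k * deg E v * m = deg E v * (k * m) := by ring
    _ ≤ ρ * x v := hx.mul_apply v ▸ deg_mul_le_signlessLap_mulVec hunif hm v
    _ ≤ ρ * M := by gcongr; exact hM v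
    _ = M * ρ := mul_comm ρ M

theorem Eigenpair.div_mul_deg_le_div (hx : Eigenpair E ρ x) (hunif : ∀ e ∈ E, e.card = k)
    (hk : 0 < k) (hρ : 0 ≤ ρ) {m M : ℝ} (hm0 : 0 < m) (hm : ∀ w, m ≤ x w) (hM : ∀ w, x w ≤ M)
    {v : V} (hv : 0 < deg E v) : ρ / (k * deg E v) ≤ M / m := by
  rw [div_le_div_iff₀ (by positivity) hm0]
  calc ρ * m ≤ ρ * x v := by gcongr; exact hm v
    _ ≤ deg E v * (k * M) := hx.mul_apply v ▸ signlessLap_mulVec_le_deg_mul hunif hM v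
    _ = M * (k * deg E v) := by ring

theorem Eigenpair.eq_of_mul_deg_div_eq (hx : Eigenpair E ρ x) (hunif : ∀ e ∈ E, e.card = k)
    (hρ : 0 < ρ) {m M : ℝ} (hm0 : 0 < m) (hm : ∀ w, m ≤ x w) (hM : ∀ w, x w ≤ M)
    {e : Finset V} (he : e ∈ E) {v : V} (hv : v ∈ e) (h : k * deg E v / ρ = M / m) : m = M := by
  rw [div_eq_div_iff hρ.ne' hm0.ne'] at h
  have hlow := hx.mul_apply v ▸ deg_mul_le_signlessLap_mulVec hunif hm v
  have hup : ρ * x v ≤ ρ * M := by gcongr; exact hM v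
  have hxv_min : x v = m :=
    (signlessLap_mulVec_eq_deg_mul_iff_of_le hunif hm v).1
      (by rw [← hx.mul_apply]; linarith) e he hv v hv
  have hxv_max : x v = M := mul_left_cancel₀ hρ.ne' (by linarith)
  rw [← hxv_min, hxv_max]

theorem Eigenpair.eq_max_of_hRegular (hx : Eigenpair E ρ x) (hunif : ∀ e ∈ E, e.card = k)
    (hconn : HConnected E) (hreg : HRegular E) {xmin xmax : ℝ}
    (hmin : IsLeast (Set.range x) xmin) (hmax : IsGreatest (Set.range x) xmax) (v : V) :
    x v = xmax := by
  obtain ⟨r, hr⟩ := hreg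
  obtain ⟨⟨vmin, rfl⟩, ⟨vmax, rfl⟩⟩ := And.intro hmin.1 hmax.1
  have hm : ∀ w, x vmin ≤ x w := fun w => hmin.2 ⟨w, rfl⟩
  have hM : ∀ w, x w ≤ x vmax := fun w => hmax.2 ⟨w, rfl⟩
  have hρ : ρ = k * r := by
    have hlow := hx.mul_apply vmin ▸ deg_mul_le_signlessLap_mulVec hunif hm vmin
    have hup := hx.mul_apply vmax ▸ signlessLap_mulVec_le_deg_mul hunif hM vmax
    rw [hr] at hlow hup
    apply le_antisymm <;> nlinarith [hx.1 vmin, hx.1 vmax]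
  refine hconn.forall_of_closed (P := fun w => x w = x vmax) (fun e he a ha hxa => ?_) rfl v
  refine (signlessLap_mulVec_eq_deg_mul_iff_of_ge hunif hM a).1 ?_ e he ha
  rw [← hx.mul_apply, hxa, hρ, hr]
  ring

end Hypergraph

/-- For a connected `k`-graph with at least one edge, maximum degree `Δ`, minimum
degree `δ` and signless Laplacian eigenpair `(ρ, x)`:
`γ(H) ≥ max {kΔ/ρ, ρ/(kδ)} ≥ √(Δ/δ)`, and `γ(H) = √(Δ/δ)` iff `H` is regular. -/
theorem gamma_ge_max_ge_sqrt {V : Type*} [Fintype V] [DecidableEq V] (k : ℕ)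
    (hk : 2 ≤ k) (E : Finset (Finset V)) (hunif : ∀ e ∈ E, e.card = k)
    (hconn : HConnected E) (hE : E.Nonempty)
    (ρ : ℝ) (x : V → ℝ) (hx : Eigenpair E ρ x)
    (Δ δ : ℕ) (hΔ : IsGreatest (Set.range (deg E)) Δ) (hδ : IsLeast (Set.range (deg E)) δ)
    (xmax xmin : ℝ) (hmax : IsGreatest (Set.range x) xmax)
    (hmin : IsLeast (Set.range x) xmin) :
    (max ((k : ℝ) * Δ / ρ) (ρ / ((k : ℝ) * δ)) ≤ xmax / xmin) ∧
    (Real.sqrt ((Δ : ℝ) / δ) ≤ max ((k : ℝ) * Δ / ρ) (ρ / ((k : ℝ) * δ))) ∧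
    (xmax / xmin = Real.sqrt ((Δ : ℝ) / δ) ↔ HRegular E) := by
  obtain ⟨⟨vΔ, rfl⟩, ⟨vδ, rfl⟩⟩ := And.intro hΔ.1 hδ.1
  have hm : ∀ w, xmin ≤ x w := fun w => hmin.2 ⟨w, rfl⟩
  have hM : ∀ w, x w ≤ xmax := fun w => hmax.2 ⟨w, rfl⟩
  have hxmin : 0 < xmin := by obtain ⟨v, rfl⟩ := hmin.1; exact hx.1 v
  have hedge := hconn.exists_mem_edge (hE.imp fun e he =>
    ⟨he, card_pos.1 (by rw [hunif e he]; omega)⟩)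
  obtain ⟨eΔ, heΔ, hvΔ⟩ := hedge vΔ
  obtain ⟨eδ, heδ, hvδ⟩ := hedge vδ
  have hρ : 0 < ρ := hx.pos_of_mem heδ hvδ
  have hδ0 := deg_pos_of_mem heδ hvδ
  have hleft := hx.mul_deg_div_le_div hunif hρ hxmin hm hM vΔ
  have hright := hx.div_mul_deg_le_div hunif (by omega) hρ.le hxmin hm hM hδ0
  have hprod : k * (deg E vΔ : ℝ) / ρ * (ρ / (k * deg E vδ)) = deg E vΔ / deg E vδ := by
    field_simp
  have hsqrt_one : √((deg E vΔ : ℝ) / deg E vδ) = 1 ↔ HRegular E := by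
    rw [Real.sqrt_eq_one, div_eq_one_iff_eq (by positivity), Nat.cast_inj, hRegular_iff_eq hΔ hδ]
  refine ⟨max_le hleft hright, hprod ▸ Real.sqrt_mul_le_max (by positivity), ⟨fun hγ => ?_, fun hreg => ?_⟩⟩
  · have hleft_eq := eq_of_mul_eq_sq_of_le hleft hright (by positivity)
      (by rw [hprod, hγ, Real.sq_sqrt (by positivity)])
    rw [← hsqrt_one, ← hγ, div_eq_one_iff_eq hxmin.ne', eq_comm]
    exact hx.eq_of_mul_deg_div_eq hunif hρ hxmin hm hM heΔ hvΔ hleft_eq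
  · obtain ⟨v, rfl⟩ := hmin.1
    rw [hsqrt_one.2 hreg, hx.eq_max_of_hRegular hunif hconn hreg hmin hmax v]
    exact div_self (hxmin.trans_le (hM v)).ne'
end
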